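/- Let V satisfy Assumption A. Then for all sufficiently large λ > 0 one has |λ - V(x)| ≈ λ uniformly for x ∈ J = (-δ_-, δ_+); in particular there exists λ₀ > 0 such that for all λ > λ₀ and all x ∈ [0, δ_+] (and analogously for x ∈ [-δ_-, 0]) one has |Im V(x)| ≲ λ and |Re V(x)| ≤ λ/2. -/

import Mathlib

open Complex Filter Asymptotics MeasureTheory Real Set intervalIntegral
open scoped Classical ENNReal Topology

noncomputable section

/-- The Japanese bracket `⟨x⟩ = √(1+x²)`. -/
def jb (x : ℝ) : ℝ := Real.sqrt (1 + x ^ 2)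

/-- `V` is bounded along the filter `l` (negation: `V` is unbounded at `±∞`). -/
def BoundedAt (V : ℝ → ℂ) (l : Filter ℝ) : Prop :=
  ∃ C : ℝ, ∀ᶠ x in l, ‖V x‖ ≤ C

/-- `f` is a function of type `T_j^{r,s}` built from the derivatives of `V`:
a finite linear combination `Σ_α c_α (V')^{α₁}(V'')^{α₂}⋯(V^{(s)})^{α_s}` over
multi-indices `α ∈ I_j^{r,s}`, i.e. with `Σ i·α_i = r` and `Σ α_i = j`. -/
def IsTType (V : ℝ → ℂ) (j r s : ℕ) (f : ℝ → ℂ) : Prop :=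
  ∃ (A : Finset (Fin s → ℕ)) (c : (Fin s → ℕ) → ℂ),
    (∀ α ∈ A, (∑ i : Fin s, ((i : ℕ) + 1) * α i) = r ∧ (∑ i : Fin s, α i) = j) ∧
    ∀ x : ℝ, f x = ∑ α ∈ A, c α * ∏ i : Fin s, (iteratedDeriv ((i : ℕ) + 1) V x) ^ (α i)

/-- The recursive JWKB system determining the functions `ψ_k'`; here `psi k`
plays the role of `ψ_k'`, with the convention `ψ_α' = 0` for `α ≥ n` or `α ≤ -2`,
`ψ_{-1}' = i λ^{-1/2}(λ - V)^{1/2}` (principal branch), and, for `-1 ≤ k ≤ n-2`,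
`ψ_{k+1}' = (1/(2ψ_{-1}'))(ψ_k'' - Σ_{α+β=k, α,β≠-1} ψ_α'ψ_β')`. -/
def PsiSystem (n : ℕ) (V : ℝ → ℂ) (lam : ℂ) (psi : ℤ → ℝ → ℂ) : Prop :=
  (∀ k : ℤ, ((n : ℤ) ≤ k ∨ k ≤ -2) → psi k = 0) ∧
  (∀ x : ℝ, psi (-1) x = Complex.I * lam ^ (-(1 / 2) : ℂ) * (lam - V x) ^ ((1 / 2) : ℂ)) ∧
  (∀ k : ℤ, -1 ≤ k → k ≤ (n : ℤ) - 2 → ∀ x : ℝ,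
    psi (k + 1) x = 1 / (2 * psi (-1) x) *
      (deriv (psi k) x - ∑ a ∈ Finset.Icc (0 : ℤ) k, psi a x * psi (k - a) x))

/-- The remainder `r_n = Σ_{k=n-1}^{2(n-1)} λ^{-k/2} φ_{k+1}`, where
`φ_{k+1} = ψ_k'' - Σ_{α+β=k} ψ_α'ψ_β'` (for `n = 0` the sum degenerates to the
single term `k = -1`). -/
def remainder (n : ℕ) (lam : ℂ) (psi : ℤ → ℝ → ℂ) (x : ℝ) : ℂ :=
  ∑ k ∈ Finset.Icc ((n : ℤ) - 1) (max ((n : ℤ) - 1) (2 * ((n : ℤ) - 1))),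
    lam ^ (-(k : ℂ) / 2) *
      (deriv (psi k) x - ∑ a ∈ Finset.Icc (-1 : ℤ) (k + 1), psi a x * psi (k - a) x)

/-- Assumption A of the paper: regularity `W^{N,∞}_loc` (modelled by `ContDiff ℝ N`),
different asymptotic behaviour of `Im V` at `±∞`, control of the derivatives of `V`
by `V`, and largeness of `Im V`. -/
structure AssumptionA (N : ℕ) (V : ℝ → ℂ) (nuM nuP eps1 eps2 : ℝ) : Prop where
  N_pos : 1 ≤ N
  smooth : ContDiff ℝ N V
  im_limsup : Filter.limsup (fun x => (V x).im) Filter.atBot < 0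
  im_liminf : 0 < Filter.liminf (fun x => (V x).im) Filter.atTop
  derIm_p : ∀ m : ℕ, 1 ≤ m → m ≤ N →
    (fun x => (iteratedDeriv m V x).im) =O[atTop]
      (fun x => |(V x).im| * jb x ^ ((m : ℝ) * nuP))
  derIm_m : ∀ m : ℕ, 1 ≤ m → m ≤ N →
    (fun x => (iteratedDeriv m V x).im) =O[atBot]
      (fun x => |(V x).im| * jb x ^ ((m : ℝ) * nuM))
  der_p : ∀ m : ℕ, 1 ≤ m → m ≤ N →
    (fun x => iteratedDeriv m V x) =O[atTop]
      (fun x => ‖V x‖ * jb x ^ ((m : ℝ) * nuP))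
  der_m : ∀ m : ℕ, 1 ≤ m → m ≤ N →
    (fun x => iteratedDeriv m V x) =O[atBot]
      (fun x => ‖V x‖ * jb x ^ ((m : ℝ) * nuM))
  eps1_pos : 0 < eps1
  big_p : ¬ BoundedAt V atTop →
    (fun x => jb x ^ (4 * (nuP + eps1) + 2) * (jb x ^ (4 * nuP + 2) + |(V x).re|))
      =O[atTop] (fun x => ((V x).im) ^ 2)
  big_m : ¬ BoundedAt V atBot →
    (fun x => jb x ^ (4 * (nuM + eps1) + 2) * (jb x ^ (4 * nuM + 2) + |(V x).re|))
      =O[atBot] (fun x => ((V x).im) ^ 2)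
  bdd_p : BoundedAt V atTop → nuP < 1
  bdd_m : BoundedAt V atBot → nuM < 1
  eps2_pos : 0 < eps2
  eps2_p : BoundedAt V atTop → eps2 < 1 - nuP
  eps2_m : BoundedAt V atBot → eps2 < 1 - nuM

/-- The set whose infimum defines `δ_+` in the unbounded case. -/
def deltaSetP (V : ℝ → ℂ) (nuP eps1 : ℝ) (lam : ℝ) : Set ℝ :=
  {d : ℝ | 0 ≤ d ∧ ((V d).im) ^ 2 / jb d ^ (4 * nuP + 2 * eps1 + 2) = lam}

/-- The set whose infimum defines `δ_-` in the unbounded case. -/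
def deltaSetM (V : ℝ → ℂ) (nuM eps1 : ℝ) (lam : ℝ) : Set ℝ :=
  {d : ℝ | 0 ≤ d ∧ ((V (-d)).im) ^ 2 / jb d ^ (4 * nuM + 2 * eps1 + 2) = lam}

/-- The cut-off radius `δ_+`. -/
def deltaP (V : ℝ → ℂ) (nuP eps1 eps2 : ℝ) (lam : ℝ) : ℝ :=
  if BoundedAt V atTop then lam ^ ((1 + eps2) / 2) else sInf (deltaSetP V nuP eps1 lam)

/-- The cut-off radius `δ_-`. -/
def deltaM (V : ℝ → ℂ) (nuM eps1 eps2 : ℝ) (lam : ℝ) : ℝ :=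
  if BoundedAt V atBot then lam ^ ((1 + eps2) / 2) else sInf (deltaSetM V nuM eps1 lam)

/-- The transition-layer width `Δ_+`. -/
def DeltaP (V : ℝ → ℂ) (nuP eps1 eps2 : ℝ) (lam : ℝ) : ℝ :=
  if BoundedAt V atTop then deltaP V nuP eps1 eps2 lam / 4
  else (deltaP V nuP eps1 eps2 lam) ^ (-nuP) / 4

/-- The transition-layer width `Δ_-`. -/
def DeltaM (V : ℝ → ℂ) (nuM eps1 eps2 : ℝ) (lam : ℝ) : ℝ :=
  if BoundedAt V atBot then deltaM V nuM eps1 eps2 lam / 4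
  else (deltaM V nuM eps1 eps2 lam) ^ (-nuM) / 4

/-- The cut-off function `ξ`: smooth, compactly supported, `0 ≤ ξ ≤ 1`,
`ξ = 1` on `(-δ_- + Δ_-, δ_+ - Δ_+)` and `ξ = 0` outside `(-δ_-, δ_+)`. -/
structure CutOff (xi : ℝ → ℝ) (dm dp Dm Dp : ℝ) : Prop where
  smooth : ContDiff ℝ (⊤ : ℕ∞) xi
  compact_supp : HasCompactSupport xi
  nonneg : ∀ x, 0 ≤ xi x
  le_one : ∀ x, xi x ≤ 1
  eq_one : ∀ x ∈ Set.Ioo (-dm + Dm) (dp - Dp), xi x = 1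
  eq_zero : ∀ x, x ∉ Set.Ioo (-dm) dp → xi x = 0

/-- The JWKB ansatz `g(x) = exp(-Σ_{k=-1}^{n-1} λ^{-k/2} ψ_k(x))`, with the
primitives fixed by `ψ_k(x₀) = 0` (`x₀ = 0` in Section 3, `x₀ = x_b` in Section 5). -/
def ansatz (n : ℕ) (lam : ℂ) (psi : ℤ → ℝ → ℂ) (x0 x : ℝ) : ℂ :=
  Complex.exp (-∑ k ∈ Finset.Icc (-1 : ℤ) ((n : ℤ) - 1),
    lam ^ (-(k : ℂ) / 2) * ∫ t in x0..x, psi k t)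

/-- `L²(ℝ)` norm. -/
def l2 (f : ℝ → ℂ) : ℝ := (eLpNorm f 2 volume).toReal

/-- `L²(s)` norm. -/
def l2On (s : Set ℝ) (f : ℝ → ℂ) : ℝ := (eLpNorm f 2 (volume.restrict s)).toReal

/-- The quantity `κ(λ) = (‖ξ''g‖ + ‖ξ'g'‖)/‖ξg‖`. -/
def kappaQ (xi : ℝ → ℝ) (g : ℝ → ℂ) : ℝ :=
  (l2 (fun x => Complex.ofReal (deriv (deriv xi) x) * g x) +
      l2 (fun x => Complex.ofReal (deriv xi x) * deriv g x)) /
    l2 (fun x => Complex.ofReal (xi x) * g x)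

/-- Same on the half-line. -/
def kappaQOn (s : Set ℝ) (xi : ℝ → ℝ) (g : ℝ → ℂ) : ℝ :=
  (l2On s (fun x => Complex.ofReal (deriv (deriv xi) x) * g x) +
      l2On s (fun x => Complex.ofReal (deriv xi x) * deriv g x)) /
    l2On s (fun x => Complex.ofReal (xi x) * g x)

/-- `(H_V - λ)f` pointwise, for the maximal Schrödinger operator `H_V = -d²/dx² + V`. -/
def schrod (V : ℝ → ℂ) (lam : ℂ) (f : ℝ → ℂ) (x : ℝ) : ℂ :=
  -(deriv (deriv f) x) + (V x - lam) * f x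

/-- The decay rate of `κ_±`. -/
def cutRate (bdd : Prop) [Decidable bdd] (delta : ℝ → ℝ) (nu eps1 eps2 c : ℝ) (lam : ℝ) : ℝ :=
  if bdd then Real.exp (-c * lam ^ (eps2 / 2))
  else Real.exp (-c * delta lam ^ (nu + 1 + eps1))

/-- The remainder rate `σ_±^{(n)}` (here stated for the `+` side; for the `-` side
apply it with the reflected data). -/
def sigmaRate (bdd : Prop) [Decidable bdd] (V : ℝ → ℂ) (delta : ℝ → ℝ)
    (nu eps2 : ℝ) (n : ℕ) (J : ℝ → Set ℝ) (lam : ℝ) : ℝ :=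
  if bdd then
    (if 0 ≤ nu then lam ^ (-(((n : ℝ) + 1) / 2) * (1 - (1 + eps2) * nu))
     else lam ^ (-((n : ℝ) + 1) / 2))
  else
    (if 0 ≤ nu then delta lam ^ (((n : ℝ) + 1) * nu) * lam ^ ((1 - (n : ℝ)) / 2)
     else lam ^ (-((n : ℝ) + 1) / 2) *
       sSup ((fun x => ‖V x‖ * jb x ^ (((n : ℝ) + 1) * nu)) '' J lam))

/-- Mollification `φ^ε = w_ε * φ` with `w_ε(x) = ε⁻¹ w(x/ε)`. -/
def mol (w : ℝ → ℝ) (eps : ℝ) (φ : ℝ → ℂ) (x : ℝ) : ℂ :=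
  ∫ y : ℝ, (eps⁻¹ * w ((x - y) / eps)) • φ y

/-- A standard mollifier: `w ∈ C_c^∞`, `0 ≤ w ≤ 1`, `supp w = [-1,1]`, `∫ w = 1`. -/
structure Mollifier (w : ℝ → ℝ) : Prop where
  smooth : ContDiff ℝ (⊤ : ℕ∞) w
  nonneg : ∀ x, 0 ≤ w x
  le_one : ∀ x, w x ≤ 1
  supp : Function.support w ⊆ Set.Icc (-1 : ℝ) 1
  integral_one : ∫ x : ℝ, w x = 1

/-- The `L^p` modulus of continuity `ω_p(ε; φ, J)` (with values in `ℝ≥0∞`). -/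
def modCont (p : ℝ≥0∞) (eps : ℝ) (φ : ℝ → ℂ) (J : Set ℝ) : ℝ≥0∞ :=
  ⨆ t ∈ {t : ℝ | 0 < |t| ∧ |t| < eps},
    eLpNorm (fun x => φ (x + t) - φ x) p (volume.restrict J)

/-- Assumption B of the paper: `V` satisfies Assumption A with `N ∈ {1,2}`,
`ν_± < 0`, and `W = W₁ + W₂` with `|Im W₁| ≤ (1-ε)|Im V|`,
`|Re W₁| ≲ |Im V|²⟨x⟩^{-4(ν_±+ε₁)-2}` on `ℝ_±`,
and `W₂ ∈ L²(ℝ)` with compact support. -/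
structure AssumptionB (N : ℕ) (V W1 W2 : ℝ → ℂ) (nuM nuP eps1 eps2 eps : ℝ) : Prop where
  base : AssumptionA N V nuM nuP eps1 eps2
  N_le : N ≤ 2
  nuM_neg : nuM < 0
  nuP_neg : nuP < 0
  eps_pos : 0 < eps
  eps_lt_one : eps < 1
  imW1 : ∀ x, |(W1 x).im| ≤ (1 - eps) * |(V x).im|
  reW1_p : ∃ C > 0, ∀ x > (0 : ℝ),
    |(W1 x).re| ≤ C * ((V x).im) ^ 2 * jb x ^ (-(4 * (nuP + eps1)) - 2)
  reW1_m : ∃ C > 0, ∀ x < (0 : ℝ),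
    |(W1 x).re| ≤ C * ((V x).im) ^ 2 * jb x ^ (-(4 * (nuM + eps1)) - 2)
  W2_L2 : MemLp W2 2 volume
  W2_supp : HasCompactSupport W2

/-- The mollified singular part `W̃ = (χ₋W₁)^{ε_-} + (χ₊W₁)^{ε_+} + W₂^{ε₀}`,
with `ε_ι = λ^{-α_ι}`. -/
def tildeW (w : ℝ → ℝ) (W1 W2 : ℝ → ℂ) (am ap a0 : ℝ) (lam : ℝ) (x : ℝ) : ℂ :=
  mol w (lam ^ (-am)) (fun y => if y < 0 then W1 y else 0) x +
    mol w (lam ^ (-ap)) (fun y => if 0 < y then W1 y else 0) x +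
    mol w (lam ^ (-a0)) W2 x

/-- Assumption C of the paper (Section 5): `N > 1`, `Im V → +∞` at `+∞`,
the conditions of Assumption A on the positive half-line, and the lower bound
`Im V' ≳ Im V ⟨x⟩^ν`. -/
structure AssumptionC (N : ℕ) (V : ℝ → ℂ) (nu eps1 : ℝ) : Prop where
  N_gt : 1 < N
  smooth : ContDiff ℝ N V
  im_tendsto : Tendsto (fun x => (V x).im) atTop atTop
  derIm : ∀ m : ℕ, 1 ≤ m → m ≤ N →
    (fun x => (iteratedDeriv m V x).im) =O[atTop]
      (fun x => |(V x).im| * jb x ^ ((m : ℝ) * nu))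
  der : ∀ m : ℕ, 1 ≤ m → m ≤ N →
    (fun x => iteratedDeriv m V x) =O[atTop]
      (fun x => ‖V x‖ * jb x ^ ((m : ℝ) * nu))
  eps1_pos : 0 < eps1
  big : (fun x => jb x ^ (4 * (nu + eps1) + 2) * (jb x ^ (4 * nu + 2) + |(V x).re|))
    =O[atTop] (fun x => ((V x).im) ^ 2)
  imDeriv_lb : ∃ c > 0, ∃ x0 : ℝ, ∀ x ≥ x0,
    c * (V x).im * jb x ^ nu ≤ (iteratedDeriv 1 V x).im

end

lemma jb_pos (x : ℝ) : 0 < jb x := Real.sqrt_pos.2 (by positivity)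

lemma one_le_jb (x : ℝ) : 1 ≤ jb x := by
  have h := Real.sqrt_le_sqrt (show (1:ℝ) ≤ 1 + x ^ 2 by nlinarith)
  simpa [jb] using h

lemma jb_continuous : Continuous jb :=
  Real.continuous_sqrt.comp (by continuity)

lemma jb_neg (x : ℝ) : jb (-x) = jb x := by simp [jb]

lemma jb_mono {a b : ℝ} (ha : 0 ≤ a) (hab : a ≤ b) : jb a ≤ jb b :=
  Real.sqrt_le_sqrt (by nlinarith)

lemma jb_self_le (x : ℝ) (hx : 0 ≤ x) : x ≤ jb x := by
  calc x = Real.sqrt (x ^ 2) := by rw [Real.sqrt_sq hx]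
    _ ≤ jb x := Real.sqrt_le_sqrt (by nlinarith)

lemma jb_zero : jb 0 = 1 := by simp [jb]
set_option maxHeartbeats 1000000 in
lemma aux_pos (f g : ℝ → ℝ) (hf : Continuous f) (hg : Continuous g)
    (p q C₀ x₁ : ℝ) (hC₀ : 0 < C₀) (hq : 0 < q)
    (hbig : ∀ x, x₁ ≤ x → jb x ^ (p + q) * (jb x ^ (p - q) + |g x|) ≤ C₀ * f x ^ 2) :
    ∃ lam0 > (0:ℝ), ∃ C3 > (0:ℝ), ∀ lam, lam0 < lam →
      ∀ x ∈ Set.Icc (0:ℝ) (sInf {d : ℝ | 0 ≤ d ∧ f d ^ 2 / jb d ^ p = lam}),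
        |f x| ≤ C3 * lam ∧ |g x| ≤ lam / 2 := by
  obtain ⟨x₂, hx₂0, hx₂1, hjbx₂⟩ : ∃ x₂ : ℝ, 0 ≤ x₂ ∧ x₁ ≤ x₂ ∧ 2*C₀ ≤ jb x₂ ^ q := by
    refine ⟨max (max x₁ 0) ((2*C₀) ^ (q⁻¹)), le_trans (le_max_right x₁ 0) (le_max_left _ _),
      le_trans (le_max_left x₁ 0) (le_max_left _ _), ?_⟩
    have hx₂0' : (0:ℝ) ≤ max (max x₁ 0) ((2*C₀) ^ (q⁻¹)) :=
      le_trans (le_max_right x₁ 0) (le_max_left _ _)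
    have h0 : (0:ℝ) ≤ (2*C₀) ^ (q⁻¹) := Real.rpow_nonneg (by positivity) _
    have h1 : (2*C₀) ^ (q⁻¹) ≤ jb (max (max x₁ 0) ((2*C₀) ^ (q⁻¹))) :=
      le_trans (le_max_right (max x₁ 0) _) (jb_self_le _ hx₂0')
    have h2 := Real.rpow_le_rpow h0 h1 hq.le
    calc 2*C₀ = ((2*C₀) ^ (q⁻¹)) ^ q := by
          rw [← Real.rpow_mul (by positivity), inv_mul_cancel₀ hq.ne', Real.rpow_one]
      _ ≤ _ := h2
  obtain ⟨Mf, hMf⟩ := (isCompact_Icc (a := (0:ℝ)) (b := x₂)).exists_bound_of_continuousOn hf.continuousOn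
  obtain ⟨Mg, hMg⟩ := (isCompact_Icc (a := (0:ℝ)) (b := x₂)).exists_bound_of_continuousOn hg.continuousOn
  obtain ⟨M, hM0, hMfM, hMgM⟩ : ∃ M : ℝ, 0 ≤ M ∧ (∀ x ∈ Set.Icc (0:ℝ) x₂, |f x| ≤ M) ∧
      (∀ x ∈ Set.Icc (0:ℝ) x₂, |g x| ≤ M) := by
    refine ⟨max (max Mf Mg) 0, le_max_right _ _, fun x hx => ?_, fun x hx => ?_⟩
    · exact le_trans (le_trans (le_of_eq (Real.norm_eq_abs _).symm) (hMf x hx))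
        (le_trans (le_max_left Mf Mg) (le_max_left _ _))
    · exact le_trans (le_trans (le_of_eq (Real.norm_eq_abs _).symm) (hMg x hx))
        (le_trans (le_max_right Mf Mg) (le_max_left _ _))
  refine ⟨M^2 + 2*M + 2, by positivity, Real.sqrt C₀ + 1, by positivity, ?_⟩
  intro lam hlam
  have hlam0 : (0:ℝ) < lam := lt_of_le_of_lt (by positivity) hlam
  set S := {d : ℝ | 0 ≤ d ∧ f d ^ 2 / jb d ^ p = lam} with hSdef
  set δ := sInf S with hδdef
  have hSbdd : BddBelow S := ⟨0, fun d hd => hd.1⟩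
  have hcont : Continuous (fun x => f x ^ 2 / jb x ^ p) := by
    apply (hf.pow 2).div
    · exact jb_continuous.rpow_const (fun x => Or.inl (jb_pos x).ne')
    · exact fun x => (Real.rpow_pos_of_pos (jb_pos x) p).ne'
  have hf0M : |f 0| ≤ M := hMfM 0 ⟨le_refl 0, hx₂0⟩
  have h0lt : f 0 ^ 2 / jb 0 ^ p < lam := by
    rw [jb_zero, Real.one_rpow, div_one]
    nlinarith [abs_nonneg (f 0), _root_.sq_abs (f 0)]
  have key : ∀ x ∈ Set.Icc 0 δ, f x ^ 2 / jb x ^ p ≤ lam := by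
    intro x hx
    by_contra hgt
    push_neg at hgt
    obtain ⟨y, hy, hyval⟩ := intermediate_value_Icc hx.1 hcont.continuousOn ⟨h0lt.le, hgt.le⟩
    have hyS : y ∈ S := ⟨hy.1, hyval⟩
    have hδy : δ ≤ y := csInf_le hSbdd hyS
    have hxy : x = y := le_antisymm (le_trans hx.2 hδy) hy.2
    rw [← hxy] at hyval
    linarith
  intro x hx
  have hjbp : 0 < jb x ^ p := Real.rpow_pos_of_pos (jb_pos x) p
  have hfx2 : f x ^ 2 ≤ lam * jb x ^ p := by
    have h := key x hx
    rw [div_le_iff₀ hjbp] at h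
    linarith
  by_cases hcase : x ≤ x₂
  · have hfb := hMfM x ⟨hx.1, hcase⟩
    have hgb := hMgM x ⟨hx.1, hcase⟩
    constructor
    · have h1 : M ≤ lam := by nlinarith
      have h2 : lam ≤ (Real.sqrt C₀ + 1) * lam := by nlinarith [Real.sqrt_nonneg C₀]
      linarith
    · nlinarith
  · push_neg at hcase
    have hx1 : x₁ ≤ x := le_trans hx₂1 hcase.le
    have hb := hbig x hx1
    have hjq2C : 2*C₀ ≤ jb x ^ q := by
      refine le_trans hjbx₂ (Real.rpow_le_rpow (jb_pos x₂).le ?_ hq.le)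
      exact jb_mono hx₂0 hcase.le
    have hjppq : (0:ℝ) ≤ jb x ^ (p + q) := (Real.rpow_pos_of_pos (jb_pos x) _).le
    have hjpmq : (0:ℝ) ≤ jb x ^ (p - q) := (Real.rpow_pos_of_pos (jb_pos x) _).le
    have hA : jb x ^ p * jb x ^ p ≤ C₀ * (lam * jb x ^ p) := by
      calc jb x ^ p * jb x ^ p = jb x ^ (p + q) * jb x ^ (p - q) := by
            rw [(Real.rpow_add (jb_pos x) (p+q) (p-q)).symm,
              (Real.rpow_add (jb_pos x) p p).symm, show (p+q)+(p-q) = p+p by ring]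
        _ ≤ jb x ^ (p + q) * (jb x ^ (p - q) + |g x|) := by nlinarith [abs_nonneg (g x)]
        _ ≤ C₀ * f x ^ 2 := hb
        _ ≤ C₀ * (lam * jb x ^ p) := by nlinarith
    have hjbpC : jb x ^ p ≤ C₀ * lam := by nlinarith
    constructor
    · have hf2 : f x ^ 2 ≤ C₀ * lam ^ 2 := by nlinarith
      have h1 : |f x| = Real.sqrt (f x ^ 2) := (Real.sqrt_sq_eq_abs _).symm
      rw [h1]
      calc Real.sqrt (f x ^ 2) ≤ Real.sqrt (C₀ * lam ^ 2) := Real.sqrt_le_sqrt hf2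
        _ = Real.sqrt C₀ * lam := by
            rw [Real.sqrt_mul hC₀.le, Real.sqrt_sq hlam0.le]
        _ ≤ (Real.sqrt C₀ + 1) * lam := by nlinarith
    · have hB : jb x ^ p * (jb x ^ q * |g x|) ≤ (C₀ * lam) * jb x ^ p := by
        calc jb x ^ p * (jb x ^ q * |g x|) = jb x ^ (p + q) * |g x| := by
              rw [Real.rpow_add (jb_pos x) p q]; ring
          _ ≤ jb x ^ (p + q) * (jb x ^ (p - q) + |g x|) := by nlinarith [abs_nonneg (g x)]
          _ ≤ C₀ * f x ^ 2 := hb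
          _ ≤ C₀ * (lam * jb x ^ p) := by nlinarith
          _ = (C₀ * lam) * jb x ^ p := by ring
      have hgq : jb x ^ q * |g x| ≤ C₀ * lam := by nlinarith
      nlinarith [mul_nonneg (sub_nonneg.2 hjq2C) (abs_nonneg (g x))]

lemma aux_bdd (f g : ℝ → ℝ) (M : ℝ) (hM : 0 ≤ M)
    (hfg : ∀ x, 0 ≤ x → |f x| ≤ M ∧ |g x| ≤ M) :
    ∃ lam0 > (0:ℝ), ∃ C3 > (0:ℝ), ∀ lam, lam0 < lam → ∀ x, 0 ≤ x →
      |f x| ≤ C3 * lam ∧ |g x| ≤ lam / 2 := by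
  refine ⟨2*M+1, by positivity, 1, one_pos, fun lam hlam x hx => ?_⟩
  obtain ⟨h1, h2⟩ := hfg x hx
  exact ⟨by nlinarith, by nlinarith⟩

lemma bdd_half (V : ℝ → ℂ) (hV : Continuous V) (C a : ℝ)
    (h : ∀ x, a ≤ x → ‖V x‖ ≤ C) :
    ∃ M, 0 ≤ M ∧ ∀ x, 0 ≤ x → ‖V x‖ ≤ M := by
  obtain ⟨M1, hM1⟩ := (isCompact_Icc (a := (0:ℝ)) (b := max a 0)).exists_bound_of_continuousOn
    hV.continuousOn
  refine ⟨max (max C M1) 0, le_max_right _ _, fun x hx => ?_⟩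
  by_cases hc : x ≤ max a 0
  · have := hM1 x ⟨hx, hc⟩
    exact le_trans this (le_trans (le_max_right C M1) (le_max_left _ _))
  · push_neg at hc
    exact le_trans (h x (le_trans (le_max_left a 0) hc.le))
      (le_trans (le_max_left C M1) (le_max_left _ _))


/-- (Remark 3.3 iii) of the paper). Under Assumption A, for all
sufficiently large `λ > 0` one has `|λ - V(x)| ≈ λ` uniformly on
`J = (-δ_-, δ_+)`; in particular `|Im V(x)| ≲ λ` and `|Re V(x)| ≤ λ/2` on
`[0, δ_+]` and on `[-δ_-, 0]`. -/
theorem statement_3 (N : ℕ) (V : ℝ → ℂ) (nuM nuP eps1 eps2 : ℝ)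
    (hA : AssumptionA N V nuM nuP eps1 eps2) :
    ∃ lam0 > (0 : ℝ), ∃ C1 > (0 : ℝ), ∃ C2 > (0 : ℝ), ∃ C3 > (0 : ℝ), ∀ lam > lam0,
      (∀ x ∈ Set.Ioo (-(deltaM V nuM eps1 eps2 lam)) (deltaP V nuP eps1 eps2 lam),
        C1 * lam ≤ ‖(lam : ℂ) - V x‖ ∧
        ‖(lam : ℂ) - V x‖ ≤ C2 * lam) ∧
      (∀ x ∈ Set.Icc (0 : ℝ) (deltaP V nuP eps1 eps2 lam),
        |(V x).im| ≤ C3 * lam ∧ |(V x).re| ≤ lam / 2) ∧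
      (∀ x ∈ Set.Icc (-(deltaM V nuM eps1 eps2 lam)) (0 : ℝ),
        |(V x).im| ≤ C3 * lam ∧ |(V x).re| ≤ lam / 2) := by
  have hVc : Continuous V := hA.smooth.continuous
  have hfc : Continuous fun x : ℝ => (V x).im := Complex.continuous_im.comp hVc
  have hgc : Continuous fun x : ℝ => (V x).re := Complex.continuous_re.comp hVc
  have hside_p : ∃ lam0 > (0:ℝ), ∃ C3 > (0:ℝ), ∀ lam, lam0 < lam →
      ∀ x ∈ Set.Icc (0:ℝ) (deltaP V nuP eps1 eps2 lam),
        |(V x).im| ≤ C3 * lam ∧ |(V x).re| ≤ lam / 2 := by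
    by_cases hb : BoundedAt V atTop
    · obtain ⟨C, hC⟩ := hb
      rw [Filter.eventually_atTop] at hC
      obtain ⟨a, ha⟩ := hC
      obtain ⟨M, hM0, hM⟩ := bdd_half V hVc C a ha
      obtain ⟨lam0, h0, C3, hC3, hcon⟩ := aux_bdd (fun x => (V x).im) (fun x => (V x).re) M hM0
        (fun x hx => ⟨le_trans (Complex.abs_im_le_norm _) (hM x hx),
          le_trans (Complex.abs_re_le_norm _) (hM x hx)⟩)
      exact ⟨lam0, h0, C3, hC3, fun lam hlam x hx => hcon lam hlam x hx.1⟩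
    · obtain ⟨C₀, hC₀, hCb⟩ := (hA.big_p hb).exists_pos
      have hCb' := hCb.bound
      rw [Filter.eventually_atTop] at hCb'
      obtain ⟨x₁, hx₁⟩ := hCb'
      have hbig : ∀ x, x₁ ≤ x →
          jb x ^ ((4*nuP + 2*eps1 + 2) + 2*eps1) *
            (jb x ^ ((4*nuP + 2*eps1 + 2) - 2*eps1) + |(V x).re|) ≤ C₀ * (V x).im ^ 2 := by
        intro x hx
        have h := hx₁ x hx
        rw [Real.norm_eq_abs, Real.norm_eq_abs] at h
        have hL : (0:ℝ) ≤ jb x ^ (4*(nuP+eps1)+2) * (jb x ^ (4*nuP+2) + |(V x).re|) :=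
          mul_nonneg (Real.rpow_pos_of_pos (jb_pos x) _).le
            (add_nonneg (Real.rpow_pos_of_pos (jb_pos x) _).le (abs_nonneg _))
        rw [_root_.abs_of_nonneg hL, _root_.abs_of_nonneg (sq_nonneg ((V x).im))] at h
        have e1 : 4*(nuP+eps1)+2 = (4*nuP + 2*eps1 + 2) + 2*eps1 := by ring
        have e2 : 4*nuP+2 = (4*nuP + 2*eps1 + 2) - 2*eps1 := by ring
        rw [e1, e2] at h
        exact h
      obtain ⟨lam0, h0, C3, hC3, hcon⟩ := aux_pos (fun x => (V x).im) (fun x => (V x).re)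
        hfc hgc (4*nuP + 2*eps1 + 2) (2*eps1) C₀ x₁ hC₀ (by linarith [hA.eps1_pos]) hbig
      refine ⟨lam0, h0, C3, hC3, fun lam hlam x hx => ?_⟩
      have hd : deltaP V nuP eps1 eps2 lam =
          sInf {d : ℝ | 0 ≤ d ∧ (V d).im ^ 2 / jb d ^ (4*nuP + 2*eps1 + 2) = lam} := by
        rw [deltaP, if_neg hb]; rfl
      exact hcon lam hlam x ⟨hx.1, by rw [← hd]; exact hx.2⟩
  have hside_m : ∃ lam0 > (0:ℝ), ∃ C3 > (0:ℝ), ∀ lam, lam0 < lam →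
      ∀ x ∈ Set.Icc (-(deltaM V nuM eps1 eps2 lam)) (0:ℝ),
        |(V x).im| ≤ C3 * lam ∧ |(V x).re| ≤ lam / 2 := by
    by_cases hb : BoundedAt V atBot
    · obtain ⟨C, hC⟩ := hb
      rw [Filter.eventually_atBot] at hC
      obtain ⟨a, ha⟩ := hC
      obtain ⟨M, hM0, hM⟩ := bdd_half (fun x => V (-x)) (hVc.comp continuous_neg) C (-a)
        (fun x hx => ha (-x) (by linarith))
      obtain ⟨lam0, h0, C3, hC3, hcon⟩ := aux_bdd (fun x => (V (-x)).im)
        (fun x => (V (-x)).re) M hM0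
        (fun x hx => ⟨le_trans (Complex.abs_im_le_norm _) (hM x hx),
          le_trans (Complex.abs_re_le_norm _) (hM x hx)⟩)
      refine ⟨lam0, h0, C3, hC3, fun lam hlam x hx => ?_⟩
      have h := hcon lam hlam (-x) (by linarith [hx.2])
      simpa using h
    · obtain ⟨C₀, hC₀, hCb⟩ := (hA.big_m hb).exists_pos
      have hCb' := hCb.bound
      rw [Filter.eventually_atBot] at hCb'
      obtain ⟨x₁, hx₁⟩ := hCb'
      have hbig : ∀ d, -x₁ ≤ d →
          jb d ^ ((4*nuM + 2*eps1 + 2) + 2*eps1) *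
            (jb d ^ ((4*nuM + 2*eps1 + 2) - 2*eps1) + |(V (-d)).re|) ≤ C₀ * (V (-d)).im ^ 2 := by
        intro d hd
        have h := hx₁ (-d) (by linarith)
        rw [Real.norm_eq_abs, Real.norm_eq_abs] at h
        have hL : (0:ℝ) ≤ jb (-d) ^ (4*(nuM+eps1)+2) * (jb (-d) ^ (4*nuM+2) + |(V (-d)).re|) :=
          mul_nonneg (Real.rpow_pos_of_pos (jb_pos _) _).le
            (add_nonneg (Real.rpow_pos_of_pos (jb_pos _) _).le (abs_nonneg _))
        rw [_root_.abs_of_nonneg hL, _root_.abs_of_nonneg (sq_nonneg ((V (-d)).im))] at h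
        have e1 : 4*(nuM+eps1)+2 = (4*nuM + 2*eps1 + 2) + 2*eps1 := by ring
        have e2 : 4*nuM+2 = (4*nuM + 2*eps1 + 2) - 2*eps1 := by ring
        rw [jb_neg, e1, e2] at h
        exact h
      obtain ⟨lam0, h0, C3, hC3, hcon⟩ := aux_pos (fun d => (V (-d)).im) (fun d => (V (-d)).re)
        (hfc.comp continuous_neg) (hgc.comp continuous_neg) (4*nuM + 2*eps1 + 2) (2*eps1) C₀
        (-x₁) hC₀ (by linarith [hA.eps1_pos]) hbig
      refine ⟨lam0, h0, C3, hC3, fun lam hlam x hx => ?_⟩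
      have hd : deltaM V nuM eps1 eps2 lam =
          sInf {d : ℝ | 0 ≤ d ∧ (V (-d)).im ^ 2 / jb d ^ (4*nuM + 2*eps1 + 2) = lam} := by
        rw [deltaM, if_neg hb]; rfl
      have h := hcon lam hlam (-x) ⟨by linarith [hx.2], by rw [← hd]; linarith [hx.1]⟩
      simpa using h
  obtain ⟨l0p, hl0p, C3p, hC3p, hp⟩ := hside_p
  obtain ⟨l0m, hl0m, C3m, hC3m, hm⟩ := hside_m
  refine ⟨max l0p l0m, lt_of_lt_of_le hl0p (le_max_left _ _),
    1/2, by norm_num,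
    max C3p C3m + 2, by nlinarith [lt_of_lt_of_le hC3p (le_max_left C3p C3m)],
    max C3p C3m, lt_of_lt_of_le hC3p (le_max_left _ _), fun lam hlam => ?_⟩
  have hlam0 : (0:ℝ) < lam := lt_trans (lt_of_lt_of_le hl0p (le_max_left _ _)) hlam
  have hPs := hp lam (lt_of_le_of_lt (le_max_left _ _) hlam)
  have hMs := hm lam (lt_of_le_of_lt (le_max_right _ _) hlam)
  have hbounds : ∀ x ∈ Set.Ioo (-(deltaM V nuM eps1 eps2 lam)) (deltaP V nuP eps1 eps2 lam),
      |(V x).im| ≤ max C3p C3m * lam ∧ |(V x).re| ≤ lam / 2 := by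
    intro x hx
    rcases le_or_gt 0 x with h0 | h0
    · obtain ⟨h1, h2⟩ := hPs x ⟨h0, hx.2.le⟩
      exact ⟨le_trans h1 (mul_le_mul_of_nonneg_right (le_max_left _ _) hlam0.le), h2⟩
    · obtain ⟨h1, h2⟩ := hMs x ⟨hx.1.le, h0.le⟩
      exact ⟨le_trans h1 (mul_le_mul_of_nonneg_right (le_max_right _ _) hlam0.le), h2⟩
  refine ⟨fun x hx => ?_, fun x hx => ?_, fun x hx => ?_⟩
  · obtain ⟨him, hre⟩ := hbounds x hx
    have hre' := abs_le.1 hre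
    constructor
    · have h1 : |((lam:ℂ) - V x).re| ≤ ‖(lam:ℂ) - V x‖ := Complex.abs_re_le_norm _
      have h2 : ((lam:ℂ) - V x).re = lam - (V x).re := by simp
      rw [h2] at h1
      have h3 : lam / 2 ≤ lam - (V x).re := by linarith
      have h4 : lam - (V x).re ≤ |lam - (V x).re| := le_abs_self _
      linarith
    · have h1 := Complex.norm_le_abs_re_add_abs_im ((lam:ℂ) - V x)
      have h2 : ((lam:ℂ) - V x).re = lam - (V x).re := by simp
      have h3 : ((lam:ℂ) - V x).im = -(V x).im := by simp
      rw [h2, h3, abs_neg] at h1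
      have h4 : |lam - (V x).re| ≤ lam + lam/2 := abs_le.2 ⟨by linarith, by linarith⟩
      have hexp : (max C3p C3m + 2) * lam = max C3p C3m * lam + 2 * lam := by ring
      rw [hexp]
      linarith
  · obtain ⟨h1, h2⟩ := hPs x hx
    exact ⟨le_trans h1 (mul_le_mul_of_nonneg_right (le_max_left _ _) hlam0.le), h2⟩
  · obtain ⟨h1, h2⟩ := hMs x hx
    exact ⟨le_trans h1 (mul_le_mul_of_nonneg_right (le_max_right _ _) hlam0.le), h2⟩
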